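/- arXiv:2310.13251 — 3 statements merged into one kernel-verified Lean document; each statement's English description precedes it below -/
import Mathlib

section
/- Suppose real sequences D_k ≥ 0 and V_k ≥ 0 satisfy V_k ≤ β̂·V_{k-1} and D_k ≤ αβ̂·V_{k-1} + β̂²·D_{k-1} for all k ≥ 1, where 0 < β̂ < 1 and α > 1. Then for all k ≥ 0, D_k ≤ (αβ̂^k(1-β̂^k)/(1-β̂) + β̂^{2k})·V_0 + β̂^{2k}·|D_0 - V_0|. -/
/-- Recursion bound for expected squared direction norms (Lemma 2 core recursion). -/
theorem direction_recursion_bound (D V : ℕ → ℝ) (β α : ℝ)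
    (hβ0 : 0 < β) (hβ1 : β < 1) (hα : 1 < α)
    (hD : ∀ k, 0 ≤ D k) (hV : ∀ k, 0 ≤ V k)
    (hVrec : ∀ k ≥ 1, V k ≤ β * V (k - 1))
    (hDrec : ∀ k ≥ 1, D k ≤ α * β * V (k - 1) + β ^ 2 * D (k - 1)) :
    ∀ k : ℕ, D k ≤ (α * β ^ k * (1 - β ^ k) / (1 - β) + β ^ (2 * k)) * V 0
      + β ^ (2 * k) * |D 0 - V 0| := by
  have h1β : (0:ℝ) < 1 - β := by linarith
  have h1β' : (1:ℝ) - β ≠ 0 := ne_of_gt h1β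
  have hVk : ∀ k, V k ≤ β ^ k * V 0 := by
    intro k
    induction k with
    | zero => simp
    | succ n ih =>
      have h := hVrec (n + 1) (by omega)
      simp only [Nat.add_sub_cancel] at h
      calc V (n + 1) ≤ β * V n := h
        _ ≤ β * (β ^ n * V 0) := by
            exact mul_le_mul_of_nonneg_left ih (le_of_lt hβ0)
        _ = β ^ (n + 1) * V 0 := by ring
  intro k
  induction k with
  | zero =>
    simp only [pow_zero, Nat.mul_zero, sub_self, mul_zero, zero_div, zero_add, one_mul]
    have h0 : D 0 - V 0 ≤ |D 0 - V 0| := le_abs_self _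
    linarith
  | succ n ih =>
    have h := hDrec (n + 1) (by omega)
    simp only [Nat.add_sub_cancel] at h
    have hαβ : 0 ≤ α * β := by positivity
    have hVn : α * β * V n ≤ α * β * (β ^ n * V 0) :=
      mul_le_mul_of_nonneg_left (hVk n) hαβ
    have hβ2 : (0:ℝ) ≤ β ^ 2 := sq_nonneg β
    have hDn : β ^ 2 * D n ≤ β ^ 2 *
        ((α * β ^ n * (1 - β ^ n) / (1 - β) + β ^ (2 * n)) * V 0
          + β ^ (2 * n) * |D 0 - V 0|) :=
      mul_le_mul_of_nonneg_left ih hβ2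
    have key : (α * β ^ (n + 1) * (1 - β ^ (n + 1)) / (1 - β) + β ^ (2 * (n + 1))) * V 0
        + β ^ (2 * (n + 1)) * |D 0 - V 0|
        = α * β * (β ^ n * V 0) + β ^ 2 *
          ((α * β ^ n * (1 - β ^ n) / (1 - β) + β ^ (2 * n)) * V 0
            + β ^ (2 * n) * |D 0 - V 0|) := by
      field_simp
      ring
    rw [key]
    calc D (n + 1) ≤ α * β * V n + β ^ 2 * D n := h
      _ ≤ _ := by linarith
end

section
/- For 0 < β̂ < 1, α > 1, and m ≥ 1, the quantity ((α-1)β̂ + 1 - (α-1+β̂)β̂^m)(1-β̂^m) is at most α. -/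
/-- The scalar bound `((α-1)β̂ + 1 - (α-1+β̂)β̂^m)(1-β̂^m) ≤ α`. -/
theorem key_scalar_bound (β α : ℝ) (m : ℕ)
    (hβ0 : 0 < β) (hβ1 : β < 1) (hα : 1 < α) (hm : 1 ≤ m) :
    ((α - 1) * β + 1 - (α - 1 + β) * β ^ m) * (1 - β ^ m) ≤ α := by
  have ht0 : 0 < β ^ m := pow_pos hβ0 m
  have ht1 : β ^ m < 1 := pow_lt_one₀ hβ0.le hβ1 (by omega)
  have htβ : β ^ m ≤ β := by
    calc β ^ m ≤ β ^ 1 := pow_le_pow_of_le_one hβ0.le hβ1.le hm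
    _ = β := pow_one β
  nlinarith [sq_nonneg (β ^ m), sq_nonneg (1 - β ^ m), mul_pos ht0 ht0,
    mul_nonneg (sub_nonneg.2 htβ) (sub_nonneg.2 ht1.le),
    mul_nonneg (sub_nonneg.2 hα.le) (mul_nonneg (sub_nonneg.2 htβ) ht0.le),
    mul_nonneg (sub_nonneg.2 hα.le) (sq_nonneg (1 - β ^ m))]
end

section
/- Let f : ℝ^d → ℝ be L-smooth, φ proper closed convex, P = f + φ, γ ∈ (0,1], η > 0, y = prox_{ηφ}(w + ηd), and w⁺ = (1-γ)w + γy. Then P(w⁺) ≤ P(w) + (γ/2)‖∇f(w) + d‖² + (γ/2 - γ/η + Lγ²/2)‖y - w‖² - (γ/2)‖∇f(w) + d - (y - w)‖². -/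
/-!
The prox objective `z ↦ ‖z - (w + η d)‖² / (2η) + φ z` is `1/η`-strongly convex, so comparing its
minimiser `y` with `w` gives `φ y - φ w ≤ ⟪d, y - w⟫ - ‖y - w‖² / η`. Along the segment
`w⁺ - w = γ (y - w)` the smoothness bound controls `f` and convexity controls `φ`; adding the
two and writing `⟪∇f(w) + d, y - w⟫` by polarization gives the estimate.
-/

open Set Filter Topology
open scoped RealInnerProductSpace

variable {E : Type*} [NormedAddCommGroup E] [InnerProductSpace ℝ E]

/-- The objective minimised by `prox_{ηφ}(c)`. -/
noncomputable def proxObjective (η : ℝ) (φ : E → ℝ) (c z : E) : ℝ :=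
  1 / (2 * η) * ‖z - c‖ ^ 2 + φ z

theorem add_le_of_forall_add_one_sub_mul_le {a b c : ℝ}
    (h : ∀ t ∈ Ioo (0 : ℝ) 1, a + (1 - t) * b ≤ c) : a + b ≤ c := by
  have hcont : Continuous fun t : ℝ ↦ a + (1 - t) * b := by fun_prop
  have hlim : Tendsto (fun t : ℝ ↦ a + (1 - t) * b) (𝓝[>] 0) (𝓝 (a + b)) :=
    tendsto_nhdsWithin_of_tendsto_nhds (hcont.tendsto' 0 _ (by simp))
  exact le_of_tendsto hlim (eventually_of_mem (Ioo_mem_nhdsGT zero_lt_one) h)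

theorem IsMinOn.add_half_mul_norm_sub_sq_le {s : Set E} {m : ℝ} {f : E → ℝ} {y z : E}
    (hf : StrongConvexOn s m f) (hmin : IsMinOn f s y) (hy : y ∈ s) (hz : z ∈ s) :
    f y + m / 2 * ‖z - y‖ ^ 2 ≤ f z := by
  refine add_le_of_forall_add_one_sub_mul_le fun t ⟨ht0, ht1⟩ ↦ ?_
  have hconv := hf.2 hy hz (by linarith : 0 ≤ 1 - t) ht0.le (by ring)
  have hle : f y ≤ f ((1 - t) • y + t • z) :=
    hmin (hf.1 hy hz (by linarith : 0 ≤ 1 - t) ht0.le (by ring))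
  simp only [smul_eq_mul] at hconv
  rw [norm_sub_rev] at hconv
  have hscaled : t * (f y + (1 - t) * (m / 2 * ‖z - y‖ ^ 2)) ≤ t * f z := by linarith
  exact le_of_mul_le_mul_left hscaled ht0

theorem ConvexOn.strongConvexOn_proxObjective {φ : E → ℝ} (hφ : ConvexOn ℝ univ φ)
    (η : ℝ) (c : E) : StrongConvexOn univ η⁻¹ (proxObjective η φ c) := by
  rw [strongConvexOn_iff_convex]
  have hexpand : ∀ z, proxObjective η φ c z - η⁻¹ / 2 * ‖z‖ ^ 2
      = φ z + (-η⁻¹) * ⟪c, z⟫ + η⁻¹ / 2 * ‖c‖ ^ 2 := by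
    intro z
    rw [proxObjective, norm_sub_sq_real, real_inner_comm]
    ring
  simp only [hexpand]
  exact (hφ.add (((-η⁻¹) • innerₗ E c).convexOn convex_univ)).add_const _

theorem ConvexOn.sub_le_inner_of_isMinOn_proxObjective {φ : E → ℝ} (hφ : ConvexOn ℝ univ φ)
    {η : ℝ} (hη : 0 < η) {w d y : E} (hy : IsMinOn (proxObjective η φ (w + η • d)) univ y) :
    φ y - φ w ≤ ⟪d, y - w⟫ - η⁻¹ * ‖y - w‖ ^ 2 := by
  have hgrowth := hy.add_half_mul_norm_sub_sq_le (hφ.strongConvexOn_proxObjective η _)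
    (mem_univ y) (mem_univ w)
  have hyc : y - (w + η • d) = (y - w) - η • d := by abel
  have hwc : w - (w + η • d) = -(η • d) := by abel
  rw [proxObjective, proxObjective, hyc, hwc, norm_neg, norm_sub_sq_real, norm_smul,
    real_inner_smul_right, Real.norm_of_nonneg hη.le, norm_sub_rev w y, real_inner_comm] at hgrowth
  field_simp at hgrowth ⊢
  linarith

theorem one_step_descent_general {dim : ℕ}
    (f φ : EuclideanSpace ℝ (Fin dim) → ℝ)
    (gradf : EuclideanSpace ℝ (Fin dim) → EuclideanSpace ℝ (Fin dim))
    (L : ℝ)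
    (hsmooth : ∀ u v : EuclideanSpace ℝ (Fin dim),
      f v ≤ f u + ⟪gradf u, v - u⟫ + (L / 2) * ‖v - u‖ ^ 2)
    (hφ : ConvexOn ℝ Set.univ φ)
    (η γ : ℝ) (hη : 0 < η) (hγ0 : 0 < γ) (hγ1 : γ ≤ 1)
    (w d y wplus : EuclideanSpace ℝ (Fin dim))
    (hy : ∀ z, (1 / (2 * η)) * ‖y - (w + η • d)‖ ^ 2 + φ y
            ≤ (1 / (2 * η)) * ‖z - (w + η • d)‖ ^ 2 + φ z)
    (hwplus : wplus = (1 - γ) • w + γ • y) :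
    f wplus + φ wplus
      ≤ f w + φ w + (γ / 2) * ‖gradf w + d‖ ^ 2
        + (γ / 2 - γ / η + L * γ ^ 2 / 2) * ‖y - w‖ ^ 2
        - (γ / 2) * ‖gradf w + d - (y - w)‖ ^ 2 := by
  have hprox := hφ.sub_le_inner_of_isMinOn_proxObjective hη (isMinOn_univ_iff.mpr hy)
  have hstep : wplus - w = γ • (y - w) := by rw [hwplus]; module
  have hf := hsmooth w wplus
  rw [hstep, real_inner_smul_right, norm_smul, Real.norm_of_nonneg hγ0.le, mul_pow] at hf
  have hφ' : φ wplus ≤ (1 - γ) * φ w + γ * φ y := by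
    simpa [hwplus] using hφ.2 (mem_univ w) (mem_univ y) (by linarith) hγ0.le (by ring)
  have hpolar := norm_sub_sq_real (gradf w + d) (y - w)
  rw [inner_add_left] at hpolar
  linear_combination hf + hφ' + γ * hprox + (γ / 2) * hpolar

/-- One-step descent inequality for `P = f + φ` under the momentum-prox update. -/
theorem one_step_descent {dim : ℕ}
    (f φ : EuclideanSpace ℝ (Fin dim) → ℝ)
    (gradf : EuclideanSpace ℝ (Fin dim) → EuclideanSpace ℝ (Fin dim))
    (L : ℝ) (hL : 0 < L)
    (hsmooth : ∀ u v : EuclideanSpace ℝ (Fin dim),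
      f v ≤ f u + ⟪gradf u, v - u⟫ + (L / 2) * ‖v - u‖ ^ 2)
    (hφ : ConvexOn ℝ Set.univ φ)
    (η γ : ℝ) (hη : 0 < η) (hγ0 : 0 < γ) (hγ1 : γ ≤ 1)
    (w d y wplus : EuclideanSpace ℝ (Fin dim))
    (hy : ∀ z, (1 / (2 * η)) * ‖y - (w + η • d)‖ ^ 2 + φ y
            ≤ (1 / (2 * η)) * ‖z - (w + η • d)‖ ^ 2 + φ z)
    (hwplus : wplus = (1 - γ) • w + γ • y) :
    f wplus + φ wplus
      ≤ f w + φ w + (γ / 2) * ‖gradf w + d‖ ^ 2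
        + (γ / 2 - γ / η + L * γ ^ 2 / 2) * ‖y - w‖ ^ 2
        - (γ / 2) * ‖gradf w + d - (y - w)‖ ^ 2 :=
  one_step_descent_general f φ gradf L hsmooth hφ η γ hη hγ0 hγ1 w d y wplus hy hwplus
end
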